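/- arXiv:1608.05915 — 3 statements merged into one kernel-verified Lean document; each statement's English description precedes it below -/
import Mathlib

section
/- Let 𝔭 = so(V) ⊕ S ⊕ V be the 11-dimensional Poincaré superalgebra with brackets [A,B] = AB−BA, [A,s] = σ(A)s, [A,v] = Av, [s,s] = κ(s,s), graded so that so(V), S, V have degrees 0, −1, −2. Then 𝔭 is a Lie superalgebra: in particular the odd-odd-odd Jacobi identity [[s,s],s] = 0 holds, i.e. σ(κ(s,s))-type terms vanish: κ(s,s)·s considered via the bracket [κ(s,s), s] = 0 since V is central on S in 𝔭; equivalently, the bracket defined by the Dirac current κ satisfies the graded Jacobi identity making so(V) ⊕ S ⊕ V a Lie superalgebra. -/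
open Module

/-- The rank-two skew endomorphism `v ∧ w` of `(V, η)`: `x ↦ η(w,x) v − η(v,x) w`. -/
noncomputable def rankTwoSkew {V : Type*} [AddCommGroup V] [Module ℝ V]
    (η : LinearMap.BilinForm ℝ V) (v w : V) : Module.End ℝ V :=
  (η w).smulRight v - (η v).smulRight w

lemma rankTwoSkew_apply {V : Type*} [AddCommGroup V] [Module ℝ V]
    (η : LinearMap.BilinForm ℝ V) (v w z : V) :
    rankTwoSkew η v w z = η w z • v - η v z • w := rfl

/-- Clifford 3-term reordering identity. -/
lemma cliff_aux3 {R : Type*} [Ring R] [Algebra ℝ R] (a b x : R) (p q : ℝ)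
    (hxa : x*a + a*x = p • 1) (hxb : x*b + b*x = q • 1) :
    x*a*b - a*b*x + b*a*x - x*b*a = (2*p) • b - (2*q) • a := by
  have e1 : x*a = p • (1:R) - a*x := eq_sub_of_add_eq hxa
  have e2 : x*b = q • (1:R) - b*x := eq_sub_of_add_eq hxb
  have h1 : x*a*b = p • b - q • a + a*(b*x) := by
    rw [e1, sub_mul, smul_mul_assoc, one_mul, mul_assoc, e2, mul_sub, mul_smul_comm, mul_one]
    module
  have h2 : x*b*a = q • a - p • b + b*(a*x) := by
    rw [e2, sub_mul, smul_mul_assoc, one_mul, mul_assoc, e1, mul_sub, mul_smul_comm, mul_one]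
    module
  rw [h1, h2, mul_assoc a b x, mul_assoc b a x]
  module

/-- Commutator of quadratic Clifford elements. -/
lemma cliff_comm {R : Type*} [Ring R] [Algebra ℝ R] (a b x y : R)
    (pax pay pbx pby : ℝ)
    (hax : a*x + x*a = pax • 1) (hay : a*y + y*a = pay • 1)
    (hbx : b*x + x*b = pbx • 1) (hby : b*y + y*b = pby • 1) :
    (a*b - b*a)*(x*y - y*x) - (x*y - y*x)*(a*b - b*a)
      = (2*pbx) • (a*y - y*a) - (2*pax) • (b*y - y*b)
        - (2*pby) • (a*x - x*a) + (2*pay) • (b*x - x*b) := by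
  have comm1 : ∀ (u v z : R) (pu pv : ℝ), u*z + z*u = pu • 1 → v*z + z*v = pv • 1 →
      u*v*z - z*(u*v) = pv • u - pu • v := by
    intro u v z pu pv hu hv
    have e1 : z*u = pu • (1:R) - u*z := by
      linear_combination (norm := noncomm_ring) hu
    have e2 : v*z = pv • (1:R) - z*v := eq_sub_of_add_eq hv
    calc u*v*z - z*(u*v) = u*(v*z) - (z*u)*v := by noncomm_ring
      _ = u*(pv • (1:R) - z*v) - (pu • (1:R) - u*z)*v := by rw [e1, e2]
      _ = pv • u - pu • v := by
          simp only [mul_sub, sub_mul, mul_smul_comm, smul_mul_assoc, mul_one, one_mul, mul_assoc]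
          module
  have h1 := comm1 a b x pax pbx hax hbx
  have h2 := comm1 a b y pay pby hay hby
  have h3 := comm1 b a x pbx pax hbx hax
  have h4 := comm1 b a y pby pay hby hay
  have L : (a*b - b*a)*(x*y - y*x) - (x*y - y*x)*(a*b - b*a)
      = ((a*b*x - x*(a*b)) * y + x*(a*b*y - y*(a*b)))
        - ((a*b*y - y*(a*b)) * x + y*(a*b*x - x*(a*b)))
        - ((b*a*x - x*(b*a)) * y + x*(b*a*y - y*(b*a)))
        + ((b*a*y - y*(b*a)) * x + y*(b*a*x - x*(b*a))) := by noncomm_ring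
  rw [L, h1, h2, h3, h4]
  simp only [sub_mul, mul_sub, smul_mul_assoc, mul_smul_comm]
  module

/-- The bracket of two rank-two skew endomorphisms. -/
lemma rankTwoSkew_bracket {V : Type*} [AddCommGroup V] [Module ℝ V]
    (η : LinearMap.BilinForm ℝ V) (hηsymm : ∀ v w : V, η v w = η w v) (v w x y : V) :
    rankTwoSkew η v w * rankTwoSkew η x y - rankTwoSkew η x y * rankTwoSkew η v w
      = η w x • rankTwoSkew η v y - η v x • rankTwoSkew η w y
        - η w y • rankTwoSkew η v x + η v y • rankTwoSkew η w x := by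
  apply LinearMap.ext; intro z
  simp only [LinearMap.sub_apply, LinearMap.add_apply, LinearMap.smul_apply, Module.End.mul_apply,
    rankTwoSkew_apply, map_sub, map_smul, smul_sub, smul_smul, smul_eq_mul]
  rw [hηsymm y v, hηsymm x v, hηsymm y w, hηsymm x w]
  module

/-- Signs of the orthonormal basis. -/
noncomputable def eps (i : Fin 11) : ℝ := if i = (0 : Fin 11) then (-1 : ℝ) else 1

lemma eps_sq (i : Fin 11) : eps i * eps i = 1 := by
  unfold eps; split_ifs <;> norm_num

section Decomp
variable {V : Type*} [AddCommGroup V] [Module ℝ V]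
    (η : LinearMap.BilinForm ℝ V)
    (hηsymm : ∀ v w : V, η v w = η w v)
    (b : Basis (Fin 11) ℝ V)
    (hb : ∀ i j : Fin 11,
      η (b i) (b j) = if i = j then (if i = (0 : Fin 11) then (-1 : ℝ) else 1) else 0)

include hb in
lemma hrepr (x : V) (i : Fin 11) : b.repr x i = eps i * η (b i) x := by
  conv_rhs => rw [← b.sum_repr x]
  rw [map_sum]
  simp only [map_smul, hb, smul_eq_mul, mul_ite, mul_one, mul_neg, mul_zero]
  rw [Finset.mul_sum, Finset.sum_eq_single i]
  · simp only [if_pos rfl, eps]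
    split_ifs <;> ring
  · intro j _ hji
    rw [if_neg (fun h : i = j => hji h.symm)]
    ring
  · simp

include hb in
lemma hsum (x : V) : ∑ i, (eps i * η (b i) x) • b i = x := by
  conv_rhs => rw [← b.sum_repr x]
  exact Finset.sum_congr rfl fun i _ => by rw [← hrepr η b hb]

include hηsymm hb in
lemma eta_nd (x : V) (hx : ∀ y, η x y = 0) : x = 0 := by
  rw [← hsum η b hb x]
  simp only [hηsymm _ x]
  simp [hx]

include hb in
lemma skew_decomp (A : Module.End ℝ V) (hA : ∀ x y : V, η (A x) y = - η x (A y)) :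
    A = (2⁻¹ : ℝ) • ∑ i, eps i • rankTwoSkew η (A (b i)) (b i) := by
  apply LinearMap.ext; intro x
  simp only [LinearMap.smul_apply, LinearMap.sum_apply]
  have step : ∀ i : Fin 11, eps i • (rankTwoSkew η (A (b i)) (b i)) x
      = (eps i * η (b i) x) • A (b i) + (eps i * η (b i) (A x)) • b i := by
    intro i
    rw [show (rankTwoSkew η (A (b i)) (b i)) x = η (b i) x • A (b i) - η (A (b i)) x • b i from rfl,
      hA (b i) x]
    rw [smul_sub, smul_smul, smul_smul]
    ring_nf
    module
  rw [Finset.sum_congr rfl fun i _ => step i, Finset.sum_add_distrib]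
  have t1 : ∑ i, (eps i * η (b i) x) • A (b i) = A x := by
    conv_lhs => rw [show (fun i => (eps i * η (b i) x) • A (b i))
      = fun i => A ((eps i * η (b i) x) • b i) from funext fun i => (map_smul A _ _).symm]
    rw [← map_sum, hsum η b hb x]
  rw [t1, hsum η b hb (A x)]
  module

end Decomp

/-- **The Poincaré superalgebra is a Lie superalgebra.** With `so(V) ⊕ V` even and `S` odd,
brackets `[A,B] = AB − BA`, `[A,s] = σ(A)s`, `[A,v] = Av`, `[s,s] = κ(s,s)`, `[v,s] = 0`,
`[v,w] = 0`, all components of the graded Jacobi identity hold; in particular the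
odd-odd-odd Jacobi identity `[[s,s],s] = 0` holds since `V` acts trivially on `S`. -/
theorem poincare_superalgebra_jacobi
    {V S : Type*} [AddCommGroup V] [Module ℝ V] [AddCommGroup S] [Module ℝ S]
    (η : LinearMap.BilinForm ℝ V)
    (hηsymm : ∀ v w : V, η v w = η w v)
    (b : Basis (Fin 11) ℝ V)
    (hb : ∀ i j : Fin 11,
      η (b i) (b j) = if i = j then (if i = (0 : Fin 11) then (-1 : ℝ) else 1) else 0)
    (hS : finrank ℝ S = 32)
    (c : V →ₗ[ℝ] Module.End ℝ S)
    (hc : ∀ v : V, c v * c v = η v v • (1 : Module.End ℝ S))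
    (ω : LinearMap.BilinForm ℝ S)
    (hωalt : ∀ s t : S, ω s t = - ω t s)
    (hωnd : ∀ s : S, (∀ t : S, ω s t = 0) → s = 0)
    (hcω : ∀ (v : V) (s t : S), ω (c v s) t = - ω s (c v t))
    -- the spinor representation of `so(V)`, characterised on rank-two generators
    (σ : Module.End ℝ V →ₗ[ℝ] Module.End ℝ S)
    (hσ : ∀ v w : V,
      σ (rankTwoSkew η v w) = (1/4 : ℝ) • (c v * c w - c w * c v))
    -- the Dirac current
    (κ : S →ₗ[ℝ] S →ₗ[ℝ] V)
    (hκ : ∀ (s t : S) (v : V), η (κ s t) v = ω s (c v t))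
    (hκsymm : ∀ s t : S, κ s t = κ t s) :
    -- the brackets of `𝔭 = so(V) ⊕ S ⊕ V` (even part modelled as pairs `(A, v)`)
    let skew : Module.End ℝ V → Prop := fun A => ∀ x y : V, η (A x) y = - η x (A y)
    let bEE : Module.End ℝ V × V → Module.End ℝ V × V → Module.End ℝ V × V :=
      fun p q => (⁅p.1, q.1⁆, p.1 q.2 - q.1 p.2)
    let bEO : Module.End ℝ V × V → S → S := fun p s => σ p.1 s
    let bOO : S → S → Module.End ℝ V × V := fun s t => ((0 : Module.End ℝ V), κ s t)
    -- even-even-even Jacobi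
    (∀ x y z : Module.End ℝ V × V,
        bEE x (bEE y z) = bEE (bEE x y) z + bEE y (bEE x z)) ∧
    -- even-even-odd Jacobi
    (∀ x y : Module.End ℝ V × V, skew x.1 → skew y.1 → ∀ s : S,
        bEO (bEE x y) s = bEO x (bEO y s) - bEO y (bEO x s)) ∧
    -- even-odd-odd Jacobi
    (∀ x : Module.End ℝ V × V, skew x.1 → ∀ s t : S,
        bEE x (bOO s t) = bOO (bEO x s) t + bOO s (bEO x t)) ∧
    -- odd-odd-odd Jacobi: in particular `[[s,s],s] = 0`
    (∀ s t u : S, bEO (bOO s t) u + bEO (bOO t u) s + bEO (bOO u s) t = 0) := by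
  intro skew bEE bEO bOO
  -- anticommutation relations
  have hcc2 : ∀ u z : V, c u * c z + c z * c u = (2 * η u z) • (1 : Module.End ℝ S) := by
    intro u z
    have h := hc (u + z)
    simp only [map_add, add_mul, mul_add] at h
    rw [hc u, hc z] at h
    simp only [LinearMap.add_apply] at h
    have h3 : c u * c z + c z * c u
        = (η u u + η z u + (η u z + η z z)) • (1 : Module.End ℝ S) - η u u • 1 - η z z • 1 := by
      rw [← h]; abel
    rw [h3, hηsymm z u]; module
  -- σ of a bracket of two rank-two generators
  have key2 : ∀ v w x y : V,
      σ (rankTwoSkew η v w * rankTwoSkew η x y - rankTwoSkew η x y * rankTwoSkew η v w)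
        = σ (rankTwoSkew η v w) * σ (rankTwoSkew η x y)
          - σ (rankTwoSkew η x y) * σ (rankTwoSkew η v w) := by
    intro v w x y
    have CC := cliff_comm (c v) (c w) (c x) (c y) (2*η v x) (2*η v y) (2*η w x) (2*η w y)
      (hcc2 v x) (hcc2 v y) (hcc2 w x) (hcc2 w y)
    have e : σ (rankTwoSkew η v w) * σ (rankTwoSkew η x y)
          - σ (rankTwoSkew η x y) * σ (rankTwoSkew η v w)
        = (1/16 : ℝ) • ((c v * c w - c w * c v) * (c x * c y - c y * c x)
            - (c x * c y - c y * c x) * (c v * c w - c w * c v)) := by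
      rw [hσ, hσ, smul_mul_assoc, mul_smul_comm, smul_mul_assoc, mul_smul_comm,
        smul_smul, smul_smul, ← smul_sub]
      module
    rw [rankTwoSkew_bracket η hηsymm, e, CC]
    simp only [map_sub, map_add, map_smul, hσ]
    module
  -- extension principle: two linear maps agreeing on rank-two generators agree on skews
  have ext_skewS : ∀ (F G : Module.End ℝ V →ₗ[ℝ] Module.End ℝ S),
      (∀ x y, F (rankTwoSkew η x y) = G (rankTwoSkew η x y)) →
      ∀ A, skew A → F A = G A := by
    intro F G h A hA
    rw [skew_decomp η b hb A hA, map_smul, map_smul, map_sum, map_sum]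
    exact congrArg _ (Finset.sum_congr rfl fun i _ => by rw [map_smul, map_smul, h])
  have ext_skewV : ∀ (F G : Module.End ℝ V →ₗ[ℝ] V),
      (∀ x y, F (rankTwoSkew η x y) = G (rankTwoSkew η x y)) →
      ∀ A, skew A → F A = G A := by
    intro F G h A hA
    rw [skew_decomp η b hb A hA, map_smul, map_smul, map_sum, map_sum]
    exact congrArg _ (Finset.sum_congr rfl fun i _ => by rw [map_smul, map_smul, h])
  -- σ is a homomorphism on brackets of skews
  have sbr1 : ∀ v w : V, ∀ B : Module.End ℝ V, skew B →
      σ (rankTwoSkew η v w * B - B * rankTwoSkew η v w)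
        = σ (rankTwoSkew η v w) * σ B - σ B * σ (rankTwoSkew η v w) := by
    intro v w B hB
    have := ext_skewS
      (σ ∘ₗ (LinearMap.mulLeft ℝ (rankTwoSkew η v w) - LinearMap.mulRight ℝ (rankTwoSkew η v w)))
      ((LinearMap.mulLeft ℝ (σ (rankTwoSkew η v w))
        - LinearMap.mulRight ℝ (σ (rankTwoSkew η v w))) ∘ₗ σ)
      (fun x y => by
        simp only [LinearMap.comp_apply, LinearMap.sub_apply, LinearMap.mulLeft_apply,
          LinearMap.mulRight_apply, map_sub]
        rw [← map_sub]
        exact key2 v w x y) B hB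
    simpa only [LinearMap.comp_apply, LinearMap.sub_apply, LinearMap.mulLeft_apply,
      LinearMap.mulRight_apply] using this
  have sbr : ∀ A B : Module.End ℝ V, skew A → skew B →
      σ (A * B - B * A) = σ A * σ B - σ B * σ A := by
    intro A B hA hB
    have := ext_skewS
      (σ ∘ₗ (LinearMap.mulRight ℝ B - LinearMap.mulLeft ℝ B))
      ((LinearMap.mulRight ℝ (σ B) - LinearMap.mulLeft ℝ (σ B)) ∘ₗ σ)
      (fun x y => by
        simp only [LinearMap.comp_apply, LinearMap.sub_apply, LinearMap.mulLeft_apply,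
          LinearMap.mulRight_apply, map_sub]
        rw [← map_sub]
        exact sbr1 x y B hB) A hA
    simpa only [LinearMap.comp_apply, LinearMap.sub_apply, LinearMap.mulLeft_apply,
      LinearMap.mulRight_apply] using this
  -- κ is equivariant: derivation property on generators
  have key3 : ∀ (v w : V) (s t : S),
      (rankTwoSkew η v w) (κ s t)
        = κ (σ (rankTwoSkew η v w) s) t + κ s (σ (rankTwoSkew η v w) t) := by
    intro v w s t
    have hdiff : ∀ x : V,
        η ((rankTwoSkew η v w) (κ s t)
          - (κ (σ (rankTwoSkew η v w) s) t + κ s (σ (rankTwoSkew η v w) t))) x = 0 := by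
      intro x
      have E3 : (c w * c v - c v * c w) * c x + c x * (c v * c w - c w * c v)
          = (2*(2 * η x v)) • c w - (2*(2 * η x w)) • c v := by
        have h := cliff_aux3 (c v) (c w) (c x) (2 * η x v) (2 * η x w) (hcc2 x v) (hcc2 x w)
        have e : (c w * c v - c v * c w) * c x + c x * (c v * c w - c w * c v)
            = c x * c v * c w - c v * c w * c x + c w * c v * c x - c x * c w * c v := by
          noncomm_ring
        rw [e, h]
      have E3ω : ω s (((c w * c v - c v * c w) * c x + c x * (c v * c w - c w * c v)) t)
          = (2*(2 * η x v)) * ω s (c w t) - (2*(2 * η x w)) * ω s (c v t) := by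
        rw [E3]
        simp only [LinearMap.sub_apply, LinearMap.smul_apply, map_sub, map_smul, smul_eq_mul]
      have lhs1 : η ((rankTwoSkew η v w) (κ s t)) x
          = ω s (c w t) * η v x - ω s (c v t) * η w x := by
        rw [rankTwoSkew_apply]
        simp only [map_sub, map_smul, LinearMap.sub_apply, LinearMap.smul_apply, smul_eq_mul]
        rw [hηsymm w (κ s t), hηsymm v (κ s t), hκ, hκ]
      have move2 : ∀ (u z : V) (a b' : S), ω (c u (c z a)) b' = ω a (c z (c u b')) := by
        intro u z a b'; rw [hcω, hcω, neg_neg]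
      have rhs1 : η (κ (σ (rankTwoSkew η v w) s) t) x
          = (1/4 : ℝ) * ω s (((c w * c v - c v * c w) * c x) t) := by
        rw [hκ, hσ]
        have e : ((1/4:ℝ) • (c v * c w - c w * c v)) s
            = (1/4:ℝ) • (c v (c w s) - c w (c v s)) := rfl
        rw [e, map_smul, map_sub]
        simp only [LinearMap.smul_apply, LinearMap.sub_apply, smul_eq_mul, map_sub]
        rw [move2 v w s (c x t), move2 w v s (c x t)]
        simp only [Module.End.mul_apply, LinearMap.sub_apply, map_sub]
      have rhs2 : η (κ s (σ (rankTwoSkew η v w) t)) x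
          = (1/4 : ℝ) * ω s ((c x * (c v * c w - c w * c v)) t) := by
        rw [hκ, hσ]
        have e : ((1/4:ℝ) • (c v * c w - c w * c v)) t
            = (1/4:ℝ) • (c v (c w t) - c w (c v t)) := rfl
        rw [e, map_smul, map_sub]
        simp only [LinearMap.smul_apply, Module.End.mul_apply, LinearMap.sub_apply,
          map_sub, map_smul, smul_eq_mul]
      have combo : ω s (((c w * c v - c v * c w) * c x + c x * (c v * c w - c w * c v)) t)
          = ω s (((c w * c v - c v * c w) * c x) t) + ω s ((c x * (c v * c w - c w * c v)) t) := by
        simp only [LinearMap.add_apply, map_add]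
      rw [map_sub, map_add, LinearMap.sub_apply, LinearMap.add_apply, lhs1, rhs1, rhs2]
      rw [combo] at E3ω
      rw [hηsymm v x, hηsymm w x] at lhs1
      linear_combination (-(1/4 : ℝ)) * E3ω + ω s (c w t) * hηsymm v x - ω s (c v t) * hηsymm w x
    have := eta_nd η hηsymm b hb _ hdiff
    rw [sub_eq_zero] at this
    exact this
  -- derivation property for all skews
  have sder : ∀ A : Module.End ℝ V, skew A → ∀ s t : S,
      A (κ s t) = κ (σ A s) t + κ s (σ A t) := by
    intro A hA s t
    have := ext_skewV
      (LinearMap.applyₗ (κ s t))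
      ((κ.flip t ∘ₗ LinearMap.applyₗ s ∘ₗ σ) + (κ s ∘ₗ LinearMap.applyₗ t ∘ₗ σ))
      (fun x y => by
        show (rankTwoSkew η x y) (κ s t)
          = κ (σ (rankTwoSkew η x y) s) t + κ s (σ (rankTwoSkew η x y) t)
        exact key3 x y s t) A hA
    exact this
  refine ⟨?_, ?_, ?_, ?_⟩
  · -- even-even-even
    intro x y z
    refine Prod.ext ?_ ?_
    · show ⁅x.1, ⁅y.1, z.1⁆⁆ = ⁅⁅x.1, y.1⁆, z.1⁆ + ⁅y.1, ⁅x.1, z.1⁆⁆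
      simp only [Ring.lie_def]
      noncomm_ring
    · show x.1 (y.1 z.2 - z.1 y.2) - ⁅y.1, z.1⁆ x.2
        = (⁅x.1, y.1⁆ z.2 - z.1 (x.1 y.2 - y.1 x.2)) + (y.1 (x.1 z.2 - z.1 x.2) - ⁅x.1, z.1⁆ y.2)
      simp only [Ring.lie_def, map_sub, LinearMap.sub_apply, Module.End.mul_apply]
      abel
  · -- even-even-odd
    intro x y hx hy s
    show σ ⁅x.1, y.1⁆ s = σ x.1 (σ y.1 s) - σ y.1 (σ x.1 s)
    rw [Ring.lie_def, sbr x.1 y.1 hx hy]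
    simp only [LinearMap.sub_apply, Module.End.mul_apply]
  · -- even-odd-odd
    intro x hx s t
    refine Prod.ext ?_ ?_
    · show ⁅x.1, (0 : Module.End ℝ V)⁆ = (0 : Module.End ℝ V) + 0
      simp [Ring.lie_def]
    · show x.1 (κ s t) - (0 : Module.End ℝ V) x.2 = κ (σ x.1 s) t + κ s (σ x.1 t)
      rw [LinearMap.zero_apply, sub_zero]
      exact sder x.1 hx s t
  · -- odd-odd-odd
    intro s t u
    show σ 0 u + σ 0 s + σ 0 t = 0
    simp
end

section
/- Let 𝔞 = 𝔥 ⊕ S' ⊕ V be a highly supersymmetric graded subalgebra of 𝔭. Then H^{d,2}(𝔞₋, 𝔞) = 0 for all even d ≥ 4. Concretely, for d = 4: any φ ∈ Hom(Λ²V, 𝔥) satisfies ∂φ(s₁, s₂, v) = −φ(κ(s₁,s₂), v), so if ∂φ = 0 then φ = 0 by surjectivity of κ on S'×S'; for even d > 4 the cochain spaces vanish. -/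
open Module

set_option maxHeartbeats 1000000 in
/-- **Lemma 2.3, second part.** For a highly supersymmetric graded subalgebra
`𝔞 = 𝔥 ⊕ S' ⊕ V` of the Poincaré superalgebra, `H^{d,2}(𝔞₋,𝔞) = 0` for all even `d ≥ 4`.
Concretely, for `d = 4`: a Spencer 2-cochain `φ : Λ²V → 𝔥` satisfies
`∂φ(s₁,s₂,v) = −φ(κ(s₁,s₂),v)`, so a cocycle must vanish by surjectivity of `κ` on
`S' × S'`; for even `d > 4` the cochain spaces vanish. -/
theorem spencer_H_d2_q2_vanishes
    {V S : Type*} [AddCommGroup V] [Module ℝ V] [AddCommGroup S] [Module ℝ S]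
    (η : LinearMap.BilinForm ℝ V)
    (hηsymm : ∀ v w : V, η v w = η w v)
    (b : Basis (Fin 11) ℝ V)
    (hb : ∀ i j : Fin 11,
      η (b i) (b j) = if i = j then (if i = (0 : Fin 11) then (1 : ℝ) else -1) else 0)
    (hS : finrank ℝ S = 32)
    (c : V →ₗ[ℝ] Module.End ℝ S)
    (hc : ∀ v : V, c v * c v = -(η v v) • (1 : Module.End ℝ S))
    (hvol : (List.ofFn fun i => c (b i)).prod = -1)
    (ω : LinearMap.BilinForm ℝ S)
    (hωalt : ∀ s t : S, ω s t = - ω t s)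
    (hωnd : ∀ s : S, (∀ t : S, ω s t = 0) → s = 0)
    (hcω : ∀ (v : V) (s t : S), ω (c v s) t = - ω s (c v t))
    (κ : S →ₗ[ℝ] S →ₗ[ℝ] V)
    (hκ : ∀ (s t : S) (v : V), η (κ s t) v = ω s (c v t))
    (𝔥 : Submodule ℝ (Module.End ℝ V))
    (h𝔥skew : ∀ A ∈ 𝔥, ∀ x y : V, η (A x) y = - η x (A y))
    (S' : Submodule ℝ S)
    (hdim : 16 < finrank ℝ S')
    (φ : V →ₗ[ℝ] V →ₗ[ℝ] Module.End ℝ V)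
    (hφalt : ∀ v w : V, φ v w = - φ w v)
    (hφ𝔥 : ∀ v w : V, φ v w ∈ 𝔥)
    (hcocycle : ∀ s ∈ S', ∀ t ∈ S', ∀ v : V, φ (κ s t) v = 0) :
    φ = 0 := by
  classical
  have hFV : FiniteDimensional ℝ V := Module.Finite.of_basis b
  have hFS : FiniteDimensional ℝ S :=
    FiniteDimensional.of_finrank_pos (by rw [hS]; norm_num)
  have hVdim : finrank ℝ V = 11 := by
    rw [finrank_eq_card_basis b, Fintype.card_fin]
  -- coordinate formula for η against basis vectors
  have hcoord : ∀ (x : V) (j : Fin 11),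
      η x (b j) = (if j = (0 : Fin 11) then (1 : ℝ) else -1) * b.repr x j := by
    intro x j
    set e : ℝ := if j = (0 : Fin 11) then (1 : ℝ) else -1 with he
    have hmaps : η.flip (b j) = e • (b.coord j) := by
      refine b.ext fun i => ?_
      have h0 : η.flip (b j) (b i) = η (b i) (b j) := rfl
      rw [h0, hb i j, LinearMap.smul_apply, Basis.coord_apply, Basis.repr_self,
        smul_eq_mul]
      rcases eq_or_ne i j with rfl | hij
      · simp [he]
      · simp [hij, Finsupp.single_apply, Ne.symm hij]
    have h2 : η.flip (b j) x = (e • (b.coord j)) x := by rw [hmaps]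
    rw [LinearMap.smul_apply, Basis.coord_apply, smul_eq_mul] at h2
    exact h2
  -- η of a vector with itself in coordinates
  have hself : ∀ x : V, η x x
      = ∑ j : Fin 11, (if j = (0 : Fin 11) then (1 : ℝ) else -1)
          * (b.repr x j * b.repr x j) := by
    intro x
    have h1 : η x x = η x (∑ j : Fin 11, b.repr x j • b j) := by rw [b.sum_repr]
    rw [h1, map_sum]
    refine Finset.sum_congr rfl fun j _ => ?_
    rw [map_smul, smul_eq_mul, hcoord]
    ring
  -- nondegeneracy of η
  have hηnd : ∀ x : V, (∀ y : V, η x y = 0) → x = 0 := by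
    intro x hx
    have hrepr : b.repr x = 0 := by
      ext j
      have := hx (b j)
      rw [hcoord] at this
      rcases eq_or_ne j (0 : Fin 11) with rfl | hj
      · simpa using this
      · simp only [hj, if_neg, if_false] at this
        have : (b.repr x) j = 0 := by linarith [this]
        simpa using this
    exact b.repr.map_eq_zero_iff.mp hrepr
  have hrefl : η.IsRefl := fun x y h => by rw [hηsymm]; exact h
  -- the span of the image of κ on S' × S'
  set W : Submodule ℝ V :=
    Submodule.span ℝ (Set.image2 (fun s t => κ s t) (S' : Set S) (S' : Set S)) with hWdef
  set U : Submodule ℝ V := η.orthogonal W with hUdef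
  -- Key step: every vector orthogonal to W is null.
  have hUnull : ∀ v ∈ U, η v v = 0 := by
    intro v hv
    by_contra hvv
    -- from orthogonality: ω s (c v t) = 0 for s, t ∈ S'
    have hωv : ∀ s ∈ S', ∀ t ∈ S', ω s ((c v) t) = 0 := by
      intro s hs t ht
      rw [← hκ]
      have hmem : κ s t ∈ W :=
        Submodule.subset_span (Set.mem_image2_of_mem hs ht)
      exact (LinearMap.BilinForm.mem_orthogonal_iff.mp hv) _ hmem
    -- c v is injective
    have hc2 : ∀ s : S, (c v) ((c v) s) = -(η v v) • s := by
      intro s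
      have := congrArg (fun f : Module.End ℝ S => f s) (hc v)
      simpa [Module.End.mul_apply, neg_smul] using this
    have hcvinj : Function.Injective (c v) := by
      intro s₁ s₂ h
      have h1 : -(η v v) • s₁ = -(η v v) • s₂ := by rw [← hc2, ← hc2, h]
      exact smul_right_injective S (neg_ne_zero.mpr hvv) h1
    -- the map Φ : S → Dual S', t ↦ (s' ↦ ω s' t)
    set Φ : S →ₗ[ℝ] Module.Dual ℝ S' := S'.dualRestrict.comp ω.flip with hΦdef
    have hflipinj : Function.Injective ω.flip := by
      rw [← LinearMap.ker_eq_bot, LinearMap.ker_eq_bot']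
      intro t ht
      refine hωnd t fun t' => ?_
      have h1 : ω t' t = 0 := by
        have := congrArg (fun f : Module.Dual ℝ S => f t') ht
        simpa [LinearMap.flip_apply] using this
      rw [hωalt, h1, neg_zero]
    have hflipsurj : Function.Surjective (ω.flip : S →ₗ[ℝ] Module.Dual ℝ S) := by
      have hfr : finrank ℝ S = finrank ℝ (Module.Dual ℝ S) :=
        (Subspace.dual_finrank_eq).symm
      exact (LinearMap.injective_iff_surjective_of_finrank_eq_finrank hfr).mp hflipinj
    have hΦsurj : Function.Surjective Φ :=
      (Subspace.dualRestrict_surjective).comp hflipsurj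
    -- rank-nullity for Φ
    have hrn : finrank ℝ (LinearMap.range Φ) + finrank ℝ (LinearMap.ker Φ)
        = finrank ℝ S := LinearMap.finrank_range_add_finrank_ker Φ
    have hrange : finrank ℝ (LinearMap.range Φ) = finrank ℝ S' := by
      rw [LinearMap.range_eq_top.mpr hΦsurj, finrank_top, Subspace.dual_finrank_eq]
    -- c v maps S' injectively into ker Φ
    have hmemker : ∀ s : S', ((c v).comp S'.subtype) s ∈ LinearMap.ker Φ := by
      intro s
      rw [LinearMap.mem_ker]
      refine LinearMap.ext fun t' => ?_
      have : ω (t' : S) ((c v) (s : S)) = 0 := hωv _ t'.2 _ s.2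
      simpa [hΦdef, Submodule.dualRestrict_apply, LinearMap.flip_apply] using this
    set ψ : S' →ₗ[ℝ] LinearMap.ker Φ :=
      LinearMap.codRestrict (LinearMap.ker Φ) ((c v).comp S'.subtype) hmemker with hψdef
    have hψinj : Function.Injective ψ := by
      rw [hψdef, ← LinearMap.ker_eq_bot, LinearMap.ker_codRestrict,
        LinearMap.ker_eq_bot]
      exact hcvinj.comp S'.injective_subtype
    have hle : finrank ℝ S' ≤ finrank ℝ (LinearMap.ker Φ) :=
      LinearMap.finrank_le_finrank_of_injective hψinj
    rw [hrange, hS] at hrn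
    omega
  -- U is totally isotropic
  have hUiso : ∀ u ∈ U, ∀ w ∈ U, η u w = 0 := by
    intro u hu w hw
    have h1 : η (u + w) (u + w) = 0 := hUnull _ (U.add_mem hu hw)
    have h2 : η u u = 0 := hUnull _ hu
    have h3 : η w w = 0 := hUnull _ hw
    have h4 : η w u = η u w := (hηsymm w u)
    simp only [map_add, LinearMap.add_apply] at h1
    linarith [h1, h2, h3, h4]
  -- hence U has dimension at most 1
  have hUrank : finrank ℝ U ≤ 1 := by
    set f : U →ₗ[ℝ] ℝ := (b.coord 0).comp U.subtype with hfdef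
    have hfinj : Function.Injective f := by
      rw [← LinearMap.ker_eq_bot, LinearMap.ker_eq_bot']
      intro u hu0
      have hr0 : b.repr (u : V) 0 = 0 := by
        simpa [hfdef, Basis.coord_apply] using hu0
      have hnull : η (u : V) (u : V) = 0 := hUnull _ u.2
      rw [hself] at hnull
      have hterms : ∀ j ∈ (Finset.univ : Finset (Fin 11)),
          (if j = (0 : Fin 11) then (1 : ℝ) else -1)
            * (b.repr (u : V) j * b.repr (u : V) j) ≤ 0 := by
        intro j _
        rcases eq_or_ne j (0 : Fin 11) with rfl | hj
        · simp [hr0]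
        · simp only [hj, if_neg, if_false]
          nlinarith [mul_self_nonneg (b.repr (u : V) j)]
      have hall := (Finset.sum_eq_zero_iff_of_nonpos hterms).mp hnull
      have hrepr : ∀ j : Fin 11, b.repr (u : V) j = 0 := by
        intro j
        rcases eq_or_ne j (0 : Fin 11) with rfl | hj
        · exact hr0
        · have := hall j (Finset.mem_univ j)
          simp only [hj, if_neg, if_false] at this
          nlinarith [this, mul_self_nonneg (b.repr (u : V) j)]
      have : (u : V) = 0 := by
        apply b.repr.map_eq_zero_iff.mp
        ext j
        simpa using hrepr j
      exact Subtype.ext this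
    have := LinearMap.finrank_le_finrank_of_injective hfinj
    simpa using this
  -- dimension count: finrank W ≥ 10
  have hbot : η.orthogonal ⊤ = ⊥ := by
    rw [Submodule.eq_bot_iff]
    intro x hx
    refine hηnd x fun y => ?_
    have := (LinearMap.BilinForm.mem_orthogonal_iff.mp hx) y Submodule.mem_top
    rw [hηsymm]
    exact this
  have horth := LinearMap.BilinForm.finrank_add_finrank_orthogonal hrefl W
  rw [hbot, inf_bot_eq, finrank_bot, add_zero, hVdim] at horth
  have hWrank : 10 ≤ finrank ℝ W := by
    rw [← hUdef] at horth
    omega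
  -- there is x₀ with W ⊔ ℝ∙x₀ = ⊤
  obtain ⟨x₀, hx₀⟩ : ∃ x₀ : V, W ⊔ (ℝ ∙ x₀) = ⊤ := by
    by_cases hWtop : W = ⊤
    · exact ⟨0, by simp [hWtop]⟩
    · obtain ⟨x₀, hx₀W⟩ : ∃ x₀ : V, x₀ ∉ W := by
        by_contra h
        push_neg at h
        exact hWtop (Submodule.eq_top_iff'.mpr h)
      refine ⟨x₀, ?_⟩
      have hlt : W < W ⊔ (ℝ ∙ x₀) := by
        refine lt_of_le_of_ne le_sup_left fun h => hx₀W ?_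
        rw [h]
        exact Submodule.mem_sup_right (Submodule.mem_span_singleton_self x₀)
      have h1 : finrank ℝ W < finrank ℝ (W ⊔ (ℝ ∙ x₀) : Submodule ℝ V) :=
        Submodule.finrank_lt_finrank_of_lt hlt
      have h2 : finrank ℝ (W ⊔ (ℝ ∙ x₀) : Submodule ℝ V) ≤ 11 := by
        rw [← hVdim]; exact Submodule.finrank_le _
      exact Submodule.eq_top_of_finrank_eq (by omega)
  -- φ vanishes on W in the first slot
  have hφW : ∀ w ∈ W, φ w = 0 := by
    intro w hw
    induction hw using Submodule.span_induction with
    | mem y hy =>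
      obtain ⟨s, hs, t, ht, rfl⟩ := hy
      exact LinearMap.ext fun v => hcocycle s hs t ht v
    | zero => simp
    | add a a' _ _ ha ha' => rw [map_add, ha, ha', add_zero]
    | smul r a _ ha => rw [map_smul, ha, smul_zero]
  -- φ x₀ x₀ = 0
  have hφdiag : φ x₀ x₀ = 0 := by
    have h1 := hφalt x₀ x₀
    have h2 : (2 : ℝ) • φ x₀ x₀ = 0 := by
      rw [two_smul]
      rw [add_eq_zero_iff_eq_neg]
      exact h1
    rcases smul_eq_zero.mp h2 with h | h
    · norm_num at h
    · exact h
  -- conclude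
  have hkey : ∀ a y : V, φ a y = 0 := by
    intro a y
    have ha : a ∈ W ⊔ (ℝ ∙ x₀) := by rw [hx₀]; exact Submodule.mem_top
    have hy : y ∈ W ⊔ (ℝ ∙ x₀) := by rw [hx₀]; exact Submodule.mem_top
    obtain ⟨w₁, hw₁, z₁, hz₁, rfl⟩ := Submodule.mem_sup.mp ha
    obtain ⟨w₂, hw₂, z₂, hz₂, rfl⟩ := Submodule.mem_sup.mp hy
    obtain ⟨r, rfl⟩ := Submodule.mem_span_singleton.mp hz₁
    obtain ⟨t, rfl⟩ := Submodule.mem_span_singleton.mp hz₂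
    have e1 : φ w₁ = 0 := hφW w₁ hw₁
    have e2 : φ w₂ = 0 := hφW w₂ hw₂
    have e3 : φ x₀ w₂ = 0 := by
      rw [hφalt x₀ w₂, e2]
      simp
    simp only [map_add, map_smul, LinearMap.add_apply, LinearMap.smul_apply,
      e1, e3, hφdiag, LinearMap.zero_apply, smul_zero, add_zero, zero_add]
  refine LinearMap.ext fun a => LinearMap.ext fun y => ?_
  rw [hkey]
  rfl
end

section
/- Let V = ℝ^{1,10} with mostly-minus metric η and let F ∈ Λ⁴V be a 4-vector satisfying η(ι_Z F, ι_W F) = 0 for all Z, W ∈ V (i.e. the symmetric 2-tensor F²_{ab} = (1/6)F_{amnp}F_b{}^{mnp} vanishes identically). Then F = 0. -/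
/-!
In the orthonormal basis `e`, `F²(Z, Z)` is a signed sum of the squares `F(Z, e_i, e_j, e_k)²`
in which every term with `i, j, k` all spacelike has sign `-1`. The remaining terms contain
`e_0`: for `Z = e_0` they vanish by alternation, so `F²(e_0, e_0) = 0` forces
`F(e_0, ·, ·, ·) = 0`. This in turn kills them for every `Z`, and `F²(Z, Z) = 0` forces
`F(Z, ·, ·, ·) = 0`.
-/

theorem Fintype.sum_sum_sum_eq_zero_iff_of_nonneg {α β γ M : Type*} [Fintype α] [Fintype β]
    [Fintype γ] [AddCommMonoid M] [PartialOrder M] [IsOrderedAddMonoid M]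
    {f : α → β → γ → M} (hf : ∀ a b c, 0 ≤ f a b c) :
    ∑ a, ∑ b, ∑ c, f a b c = 0 ↔ ∀ a b c, f a b c = 0 := by
  simp_rw [← Fintype.sum_prod_type', Fintype.sum_eq_zero_iff_of_nonneg fun _ => hf _ _ _,
    funext_iff, Prod.forall]
  rfl

namespace AlternatingMap

variable {R M N : Type*} [CommRing R] [AddCommGroup M] [Module R M] [AddCommGroup N] [Module R N]
  {n : ℕ}

theorem map_eq_zero_of_curryLeft_eq_zero (f : M [⋀^Fin (n + 1)]→ₗ[R] N) {x : M}
    (hx : f.curryLeft x = 0) {v : Fin (n + 1) → M} {m : Fin (n + 1)} (hm : v m = x) : f v = 0 := by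
  -- swapping slots `0` and `m` brings `x` to the front and only changes the sign
  have h := f.map_perm v (Equiv.swap 0 m)
  rw [← Matrix.cons_head_tail (v ∘ _), ← curryLeft_apply_apply] at h
  simp only [Matrix.vecHead, Function.comp_apply, Equiv.swap_apply_left, hm, hx,
    AlternatingMap.zero_apply] at h
  exact (smul_eq_zero_iff_eq _).mp h.symm

theorem eq_zero_of_curryLeft_eq_zero (f : M [⋀^Fin (n + 1)]→ₗ[R] N) (hf : ∀ x, f.curryLeft x = 0) :
    f = 0 := by
  ext v
  rw [← Matrix.cons_head_tail v, ← curryLeft_apply_apply, hf]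
  rfl

end AlternatingMap

theorem curryLeft_eq_zero_of_signed_sum_eq_zero {ι V : Type*} [Fintype ι] [DecidableEq ι]
    [AddCommGroup V] [Module ℝ V] (b : Module.Basis ι ℝ V) (t : ι)
    (F : AlternatingMap ℝ V ℝ (Fin 4)) (Z : V)
    (ht : ∀ i j k, i = t ∨ j = t ∨ k = t → F ![Z, b i, b j, b k] = 0)
    (hZ : ∑ i, ∑ j, ∑ k,
        (if i = t then (1 : ℝ) else -1) * (if j = t then (1 : ℝ) else -1) *
        (if k = t then (1 : ℝ) else -1) * (F ![Z, b i, b j, b k] * F ![Z, b i, b j, b k]) = 0) :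
    F.curryLeft Z = 0 := by
  have hterm : ∀ i j k, (if i = t then (1 : ℝ) else -1) * (if j = t then (1 : ℝ) else -1) *
      (if k = t then (1 : ℝ) else -1) * (F ![Z, b i, b j, b k] * F ![Z, b i, b j, b k]) =
      -F ![Z, b i, b j, b k] ^ 2 := by
    intro i j k
    by_cases h : i = t ∨ j = t ∨ k = t
    · simp [ht i j k h]
    · simp only [not_or] at h
      simp only [h.1, h.2.1, h.2.2, if_false]
      ring
  simp only [hterm, Finset.sum_neg_distrib, neg_eq_zero,
    Fintype.sum_sum_sum_eq_zero_iff_of_nonneg fun _ _ _ => sq_nonneg _, sq_eq_zero_iff] at hZ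
  refine b.ext_alternating fun v _ => ?_
  rw [AlternatingMap.curryLeft_apply_apply, AlternatingMap.zero_apply, ← hZ (v 0) (v 1) (v 2)]
  congr
  ext m
  fin_cases m <;> rfl

theorem four_form_square_zero_general
    {V : Type*} [AddCommGroup V] [Module ℝ V]
    (b : Module.Basis (Fin 11) ℝ V)
    (F : AlternatingMap ℝ V ℝ (Fin 4))
    (hF : ∀ Z W : V,
      ∑ i : Fin 11, ∑ j : Fin 11, ∑ k : Fin 11,
        (if i = (0 : Fin 11) then (1 : ℝ) else -1) *
        (if j = (0 : Fin 11) then (1 : ℝ) else -1) *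
        (if k = (0 : Fin 11) then (1 : ℝ) else -1) *
        (F ![Z, b i, b j, b k] * F ![W, b i, b j, b k]) = 0) :
    F = 0 := by
  have htime : F.curryLeft (b 0) = 0 := by
    refine curryLeft_eq_zero_of_signed_sum_eq_zero b 0 F (b 0) ?_ (hF _ _)
    rintro i j k (rfl | rfl | rfl)
    exacts [F.map_eq_zero_of_eq _ (i := 0) (j := 1) rfl (by decide),
      F.map_eq_zero_of_eq _ (i := 0) (j := 2) rfl (by decide),
      F.map_eq_zero_of_eq _ (i := 0) (j := 3) rfl (by decide)]
  refine F.eq_zero_of_curryLeft_eq_zero fun Z =>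
    curryLeft_eq_zero_of_signed_sum_eq_zero b 0 F Z ?_ (hF Z Z)
  rintro i j k (rfl | rfl | rfl)
  exacts [F.map_eq_zero_of_curryLeft_eq_zero htime (m := 1) rfl,
    F.map_eq_zero_of_curryLeft_eq_zero htime (m := 2) rfl,
    F.map_eq_zero_of_curryLeft_eq_zero htime (m := 3) rfl]

/-- **A 4-form on `ℝ^{1,10}` with vanishing square is zero.** Let `η` be a lorentzian inner
product of signature `(1,10)` on the 11-dimensional space `V`, with orthonormal basis `b`,
and let `F` be a 4-form on `V`. If the symmetric 2-tensor
`F²(Z,W) = Σ_{a,b,c} η^{aa} η^{bb} η^{cc} F(Z,e_a,e_b,e_c) F(W,e_a,e_b,e_c)` vanishes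
identically, then `F = 0`. -/
theorem four_form_square_zero
    {V : Type*} [AddCommGroup V] [Module ℝ V]
    (η : LinearMap.BilinForm ℝ V)
    (hηsymm : ∀ v w : V, η v w = η w v)
    (b : Module.Basis (Fin 11) ℝ V)
    (hb : ∀ i j : Fin 11,
      η (b i) (b j) = if i = j then (if i = (0 : Fin 11) then (1 : ℝ) else -1) else 0)
    (F : AlternatingMap ℝ V ℝ (Fin 4))
    (hF : ∀ Z W : V,
      ∑ i : Fin 11, ∑ j : Fin 11, ∑ k : Fin 11,
        (if i = (0 : Fin 11) then (1 : ℝ) else -1) *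
        (if j = (0 : Fin 11) then (1 : ℝ) else -1) *
        (if k = (0 : Fin 11) then (1 : ℝ) else -1) *
        (F ![Z, b i, b j, b k] * F ![W, b i, b j, b k]) = 0) :
    F = 0 :=
  four_form_square_zero_general b F hF
end
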